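/- Under IMCO and Monotonicity, the share π_w identifies the proportion of immediate always-takers among always-takers: for each wave w > 1 with (T_w(1), T_w(0)) independent of Z, E[1[T_w = w] | Z = 0] = P(T_w(1) = T_w(0) = w) and E[1[1 ≤ T_w < w] | Z = 1] = P(w > T_w(1) = T_w(0) ≥ 1); hence, if P(T_w(1) = T_w(0) ≥ 1) > 0, π_w = E[1[T_w = w] | Z = 0] / (E[1[T_w = w] | Z = 0] + E[1[1 ≤ T_w < w] | Z = 1]) equals P(T_w(1) = T_w(0) = w | T_w(1) = T_w(0) ≥ 1). -/

import Mathlib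

/-!
Random assignment makes the potential exposures `(T_w(1), T_w(0))` independent of `Z`, so within
the arm `Z = z` the observed exposure `T_w(z)` has its unconditional law. In the control arm,
`T_w(0) = w` forces `T_w(1) = w` by monotonicity and `T_w(1) ≤ w`: these are the immediate
always-takers. In the treated arm, an exposure `1 ≤ T_w(1) < w` rules out compliers by IMCO,
so `T_w(1) = T_w(0)`: these are the delayed always-takers. The always-takers with `T_w(0) ≥ 1`
split disjointly into these two strata, and `π_w` is the share of the first.
-/

open MeasureTheory ProbabilityTheory Finset

/-- Conditional mean `E[X | A]`: the expectation of `X` under `P` conditioned on the event `A`. -/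
noncomputable def cmean {Ω : Type*} [MeasurableSpace Ω] (P : MeasureTheory.Measure Ω)
    (A : Set Ω) (X : Ω → ℝ) : ℝ :=
  ∫ ω, X ω ∂(P[|A])

section CondMean

variable {Ω : Type*} [MeasurableSpace Ω] {P : Measure Ω}

lemma cmean_congr {A : Set Ω} (hA : MeasurableSet A) {f g : Ω → ℝ} (h : Set.EqOn f g A) :
    cmean P A f = cmean P A g :=
  integral_congr_ae ((ae_cond_mem hA).mono h)

lemma cmean_indicator_one (A : Set Ω) {S : Set Ω} (hS : MeasurableSet S) :
    cmean P A (S.indicator 1) = (P[S|A]).toReal :=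
  integral_indicator_one hS

lemma ProbabilityTheory.IndepFun.cond_preimage_eq {β γ : Type*} [MeasurableSpace β]
    [MeasurableSpace γ] [IsFiniteMeasure P] {V : Ω → β} {Z : Ω → γ} (hind : IndepFun V Z P)
    (hZ : Measurable Z) {S : Set β} {B : Set γ} (hS : MeasurableSet S) (hB : MeasurableSet B)
    (hB0 : P (Z ⁻¹' B) ≠ 0) :
    P[V ⁻¹' S | Z ⁻¹' B] = P (V ⁻¹' S) := by
  rw [cond_apply (hZ hB), hind.symm.measure_inter_preimage_eq_mul B S hB hS, ← mul_assoc,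
    ENNReal.inv_mul_cancel hB0 (measure_ne_top P _), one_mul]

lemma cmean_eq_of_indepFun {β γ : Type*} [MeasurableSpace β] [MeasurableSpace γ]
    [MeasurableSingletonClass γ] [IsFiniteMeasure P] {V : Ω → β} {Z : Ω → γ}
    (hind : IndepFun V Z P) (hV : Measurable V) (hZ : Measurable Z) {z : γ}
    (hz : P {ω | Z ω = z} ≠ 0) {S : Set β} (hS : MeasurableSet S) {f : Ω → ℝ}
    (hf : Set.EqOn f ((V ⁻¹' S).indicator 1) {ω | Z ω = z}) :
    cmean P {ω | Z ω = z} f = (P (V ⁻¹' S)).toReal := by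
  have hA : MeasurableSet {ω | Z ω = z} := hZ (measurableSet_singleton z)
  rw [cmean_congr hA hf, cmean_indicator_one _ (hV hS),
    show {ω | Z ω = z} = Z ⁻¹' {z} from rfl,
    hind.cond_preimage_eq hZ hS (measurableSet_singleton z) hz]

lemma toReal_cond_union [IsFiniteMeasure P] {E F : Set Ω} (hE : MeasurableSet E)
    (hF : MeasurableSet F) (hEF : Disjoint E F) :
    (P[E | E ∪ F]).toReal = (P E).toReal / ((P E).toReal + (P F).toReal) := by
  rw [cond_apply' hE, Set.union_inter_cancel_left, measure_union hEF hF, ENNReal.toReal_mul,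
    ENNReal.toReal_inv, ENNReal.toReal_add (measure_ne_top P E) (measure_ne_top P F),
    inv_mul_eq_div]

lemma measure_eq_zero_ne_zero_of_le_one [IsProbabilityMeasure P] {Z : Ω → ℕ}
    (hZ : Measurable Z) (hbin : ∀ ω, Z ω ≤ 1) (hlt : P {ω | Z ω = 1} < 1) :
    P {ω | Z ω = 0} ≠ 0 := by
  have hcompl : {ω | Z ω = 0} = {ω | Z ω = 1}ᶜ := by
    ext ω
    have := hbin ω
    simp only [Set.mem_ofPred_eq, Set.mem_compl_iff]
    omega
  have hZ1 : MeasurableSet {ω | Z ω = 1} := hZ (measurableSet_singleton 1)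
  rw [hcompl, prob_compl_eq_one_sub hZ1]
  exact (tsub_pos_of_lt hlt).ne'

end CondMean

section PotentialExposures

variable {Ω : Type*} {T1 T0 : Ω → ℕ} {w : ℕ}

lemma alwaysTakers_eq_immediate_union_delayed (hrange : ∀ ω, T0 ω ≤ w) (hw : 1 ≤ w) :
    {ω | T1 ω = T0 ω ∧ 1 ≤ T0 ω}
      = {ω | T1 ω = w ∧ T0 ω = w} ∪ {ω | T1 ω = T0 ω ∧ 1 ≤ T0 ω ∧ T0 ω < w} := by
  ext ω
  simp only [Set.mem_ofPred_eq, Set.mem_union]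
  have := hrange ω
  omega

lemma disjoint_immediate_delayed :
    Disjoint {ω | T1 ω = w ∧ T0 ω = w} {ω | T1 ω = T0 ω ∧ 1 ≤ T0 ω ∧ T0 ω < w} :=
  Set.disjoint_left.mpr fun _ himm hdel => hdel.2.2.ne himm.2

variable [MeasurableSpace Ω] {P : Measure Ω}

lemma measure_control_eq_top_eq_immediate (hrange : ∀ᵐ ω ∂P, T1 ω ≤ w)
    (hmono : ∀ᵐ ω ∂P, T0 ω ≤ T1 ω) :
    P {ω | T0 ω = w} = P {ω | T1 ω = w ∧ T0 ω = w} := by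
  refine measure_congr (Filter.eventuallyEq_set.mpr ?_)
  filter_upwards [hrange, hmono] with ω h1 h0
  omega

lemma measure_treated_early_eq_delayed (hmono : ∀ᵐ ω ∂P, T0 ω ≤ T1 ω)
    (himco : ∀ᵐ ω ∂P, T0 ω < T1 ω → T1 ω = w) :
    P {ω | 1 ≤ T1 ω ∧ T1 ω < w} = P {ω | T1 ω = T0 ω ∧ 1 ≤ T0 ω ∧ T0 ω < w} := by
  refine measure_congr (Filter.eventuallyEq_set.mpr ?_)
  filter_upwards [hmono, himco] with ω hle himm
  omega

end PotentialExposures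

theorem always_taker_share_general
    {Ω : Type*} [MeasurableSpace Ω] (P : MeasureTheory.Measure Ω) [IsProbabilityMeasure P]
    (Z : Ω → ℕ) (hZmeas : Measurable Z) (hZbin : ∀ ω, Z ω ≤ 1)
    (hZpos : 0 < P {ω | Z ω = 1}) (hZlt : P {ω | Z ω = 1} < 1)
    (wbar : ℕ)
    (T : ℕ → ℕ → Ω → ℕ) (hTmeas : ∀ w z, Measurable (T w z))
    (hTrange : ∀ w ∈ Set.Icc 1 wbar, ∀ z ≤ 1, ∀ ω, T w z ω ≤ w)
    (hIndepT : ∀ w ∈ Set.Icc 1 wbar, IndepFun (fun ω => (T w 1 ω, T w 0 ω)) Z P)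
    (hMono : ∀ w ∈ Set.Icc 1 wbar, ∀ᵐ ω ∂P, T w 0 ω ≤ T w 1 ω)
    (hIMCO : ∀ w ∈ Set.Icc 1 wbar, ∀ᵐ ω ∂P, T w 0 ω < T w 1 ω → T w 1 ω = w)
    (w : ℕ) (hw2 : 2 ≤ w) (hwle : w ≤ wbar)
    (piw : ℝ)
    (hpiw : piw =
      cmean P {ω | Z ω = 0} (fun ω => if T w (Z ω) ω = w then (1 : ℝ) else 0) /
        (cmean P {ω | Z ω = 0} (fun ω => if T w (Z ω) ω = w then (1 : ℝ) else 0)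
          + cmean P {ω | Z ω = 1}
              (fun ω => if 1 ≤ T w (Z ω) ω ∧ T w (Z ω) ω < w then (1 : ℝ) else 0))) :
    (cmean P {ω | Z ω = 0} (fun ω => if T w (Z ω) ω = w then (1 : ℝ) else 0)
        = (P {ω | T w 1 ω = w ∧ T w 0 ω = w}).toReal) ∧
    (cmean P {ω | Z ω = 1} (fun ω => if 1 ≤ T w (Z ω) ω ∧ T w (Z ω) ω < w then (1 : ℝ) else 0)
        = (P {ω | T w 1 ω = T w 0 ω ∧ 1 ≤ T w 0 ω ∧ T w 0 ω < w}).toReal) ∧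
    (0 < P {ω | T w 1 ω = T w 0 ω ∧ 1 ≤ T w 0 ω} →
      piw = ((P[|{ω | T w 1 ω = T w 0 ω ∧ 1 ≤ T w 0 ω}])
        {ω | T w 1 ω = w ∧ T w 0 ω = w}).toReal) := by
  have hw : w ∈ Set.Icc 1 wbar := ⟨by omega, hwle⟩
  have hV : Measurable fun ω => (T w 1 ω, T w 0 ω) := (hTmeas w 1).prodMk (hTmeas w 0)
  have hZ0 := measure_eq_zero_ne_zero_of_le_one hZmeas hZbin hZlt
  have hcontrol : cmean P {ω | Z ω = 0} (fun ω => if T w (Z ω) ω = w then (1 : ℝ) else 0)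
      = (P {ω | T w 0 ω = w}).toReal :=
    cmean_eq_of_indepFun (hIndepT w hw) hV hZmeas hZ0 (S := {p | p.2 = w})
      (measurable_snd (measurableSet_singleton w))
      fun ω hω => by simp [Set.indicator_apply, show Z ω = 0 from hω]
  have htreated : cmean P {ω | Z ω = 1}
      (fun ω => if 1 ≤ T w (Z ω) ω ∧ T w (Z ω) ω < w then (1 : ℝ) else 0)
      = (P {ω | 1 ≤ T w 1 ω ∧ T w 1 ω < w}).toReal :=
    cmean_eq_of_indepFun (hIndepT w hw) hV hZmeas hZpos.ne' (S := {p | 1 ≤ p.1 ∧ p.1 < w})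
      ((measurable_fst measurableSet_Ici).inter (measurable_fst measurableSet_Iio))
      fun ω hω => by simp [Set.indicator_apply, show Z ω = 1 from hω]
  rw [measure_control_eq_top_eq_immediate (ae_of_all _ (hTrange w hw 1 le_rfl)) (hMono w hw)]
    at hcontrol
  rw [measure_treated_early_eq_delayed (hMono w hw) (hIMCO w hw)] at htreated
  refine ⟨hcontrol, htreated, fun _ => ?_⟩
  have hT0 := hTmeas w 0
  have himm : MeasurableSet {ω | T w 1 ω = w ∧ T w 0 ω = w} :=
    (hTmeas w 1 (measurableSet_singleton w)).inter (hT0 (measurableSet_singleton w))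
  have hdel : MeasurableSet {ω | T w 1 ω = T w 0 ω ∧ 1 ≤ T w 0 ω ∧ T w 0 ω < w} :=
    (measurableSet_eq_fun (hTmeas w 1) hT0).inter
      ((hT0 measurableSet_Ici).inter (hT0 measurableSet_Iio))
  rw [hpiw, hcontrol, htreated,
    alwaysTakers_eq_immediate_union_delayed (hTrange w hw 0 zero_le_one) hw.1,
    toReal_cond_union himm hdel disjoint_immediate_delayed]

theorem always_taker_share
    {Ω : Type*} [MeasurableSpace Ω] (P : MeasureTheory.Measure Ω) [IsProbabilityMeasure P]
    (Z : Ω → ℕ) (hZmeas : Measurable Z) (hZbin : ∀ ω, Z ω ≤ 1)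
    (hZpos : 0 < P {ω | Z ω = 1}) (hZlt : P {ω | Z ω = 1} < 1)
    (wbar : ℕ) (hwbar : 1 ≤ wbar)
    (T : ℕ → ℕ → Ω → ℕ) (hTmeas : ∀ w z, Measurable (T w z))
    (hTrange : ∀ w ∈ Set.Icc 1 wbar, ∀ z ≤ 1, ∀ ω, T w z ω ≤ w)
    (hIndepT : ∀ w ∈ Set.Icc 1 wbar, IndepFun (fun ω => (T w 1 ω, T w 0 ω)) Z P)
    (hMono : ∀ w ∈ Set.Icc 1 wbar, ∀ᵐ ω ∂P, T w 0 ω ≤ T w 1 ω)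
    (hIMCO : ∀ w ∈ Set.Icc 1 wbar, ∀ᵐ ω ∂P, T w 0 ω < T w 1 ω → T w 1 ω = w)
    (w : ℕ) (hw2 : 2 ≤ w) (hwle : w ≤ wbar)
    (piw : ℝ)
    (hpiw : piw =
      cmean P {ω | Z ω = 0} (fun ω => if T w (Z ω) ω = w then (1 : ℝ) else 0) /
        (cmean P {ω | Z ω = 0} (fun ω => if T w (Z ω) ω = w then (1 : ℝ) else 0)
          + cmean P {ω | Z ω = 1}
              (fun ω => if 1 ≤ T w (Z ω) ω ∧ T w (Z ω) ω < w then (1 : ℝ) else 0))) :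
    (cmean P {ω | Z ω = 0} (fun ω => if T w (Z ω) ω = w then (1 : ℝ) else 0)
        = (P {ω | T w 1 ω = w ∧ T w 0 ω = w}).toReal) ∧
    (cmean P {ω | Z ω = 1} (fun ω => if 1 ≤ T w (Z ω) ω ∧ T w (Z ω) ω < w then (1 : ℝ) else 0)
        = (P {ω | T w 1 ω = T w 0 ω ∧ 1 ≤ T w 0 ω ∧ T w 0 ω < w}).toReal) ∧
    (0 < P {ω | T w 1 ω = T w 0 ω ∧ 1 ≤ T w 0 ω} →
      piw = ((P[|{ω | T w 1 ω = T w 0 ω ∧ 1 ≤ T w 0 ω}])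
        {ω | T w 1 ω = w ∧ T w 0 ω = w}).toReal) :=
  always_taker_share_general P Z hZmeas hZbin hZpos hZlt wbar T hTmeas hTrange hIndepT hMono hIMCO w
    hw2 hwle piw hpiw
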